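/- arXiv:2602.11152 — 11 statements merged into one kernel-verified Lean document; each statement's English description precedes it below -/
import Mathlib

section
/- Let β > 0, let V be a finite index set, and for each i ∈ V let x_i, z_i ∈ [0,1]. Then ∑_{i∈V} (σ_β(x_i − z_i) − σ_β(−z_i)) ≥ ((∑_{i∈V} x_i − ∑_{i∈V} z_i)/2) · (1 − exp(−β))/(1 + exp(−β)). -/
noncomputable def sigma (β t : ℝ) : ℝ := 1 / (1 + Real.exp (-(β * t)))

open Real Set

/-!
Writing `σ_β(t) = sigmoid (β t)`, the sigmoid is concave on `[0, ∞)`: its derivative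
`s (1 - s)` decreases once `s = sigmoid x ≥ 1/2`. Hence on `[0, 1]` the function `σ_β - 1/2`
lies above its chord `t (σ_β(1) - 1/2)`, which gives the bound for each `i` with `x_i ≥ z_i`
since `σ_β(-z_i) ≤ 1/2`. When `x_i < z_i` the left-hand term is nonnegative by monotonicity
while the right-hand one is nonpositive. Summing over `V` finishes the proof.
-/

lemma Real.one_half_le_sigmoid_of_nonneg {x : ℝ} (hx : 0 ≤ x) : 1 / 2 ≤ sigmoid x := by
  simpa [sigmoid_zero] using sigmoid_le hx

lemma Real.sigmoid_le_one_half_of_nonpos {x : ℝ} (hx : x ≤ 0) : sigmoid x ≤ 1 / 2 := by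
  simpa [sigmoid_zero] using sigmoid_le hx

lemma Real.sigmoid_sub_one_half (x : ℝ) :
    sigmoid x - 1 / 2 = (1 - exp (-x)) / (1 + exp (-x)) / 2 := by
  have : 0 < 1 + exp (-x) := by positivity
  rw [sigmoid_def]
  field_simp
  ring

lemma Real.concaveOn_sigmoid_Ici : ConcaveOn ℝ (Ici 0) sigmoid := by
  refine AntitoneOn.concaveOn_of_deriv (convex_Ici 0) continuous_sigmoid.continuousOn
    differentiable_sigmoid.differentiableOn ?_
  rw [interior_Ici, deriv_sigmoid]
  intro a ha b _ hab
  have hsa := one_half_le_sigmoid_of_nonneg (le_of_lt ha)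
  have hsab := sigmoid_le hab
  -- `u ↦ u (1 - u)` is decreasing for `u ≥ 1/2`
  nlinarith

lemma Real.mul_sigmoid_sub_one_half_le {β t : ℝ} (hβ : 0 ≤ β) (ht : t ∈ Icc (0 : ℝ) 1) :
    t * (sigmoid β - 1 / 2) ≤ sigmoid (β * t) - 1 / 2 := by
  have hchord := concaveOn_sigmoid_Ici.2 (mem_Ici.2 le_rfl) (mem_Ici.2 hβ)
    (sub_nonneg.2 ht.2) ht.1 (sub_add_cancel 1 t)
  simp only [smul_eq_mul, mul_zero, zero_add, sigmoid_zero] at hchord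
  rw [mul_comm β t]
  linarith

lemma sigma_eq_sigmoid (β t : ℝ) : sigma β t = sigmoid (β * t) := by
  rw [sigma, sigmoid_def, one_div]

lemma mul_sigmoid_sub_one_half_le_sigma_sub {β x z : ℝ} (hβ : 0 ≤ β)
    (hx : x ∈ Icc (0 : ℝ) 1) (hz : 0 ≤ z) :
    (x - z) * (sigmoid β - 1 / 2) ≤ sigma β (x - z) - sigma β (-z) := by
  rw [sigma_eq_sigmoid, sigma_eq_sigmoid]
  have hβz : sigmoid (β * -z) ≤ 1 / 2 :=
    sigmoid_le_one_half_of_nonpos (by nlinarith)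
  rcases le_or_gt z x with hzx | hxz
  · have hchord := mul_sigmoid_sub_one_half_le hβ
      (t := x - z) ⟨sub_nonneg.2 hzx, by linarith [hx.2]⟩
    linarith
  · have hmono : sigmoid (β * -z) ≤ sigmoid (β * (x - z)) :=
      sigmoid_le (mul_le_mul_of_nonneg_left (by linarith [hx.1]) hβ)
    have hneg : (x - z) * (sigmoid β - 1 / 2) ≤ 0 :=
      mul_nonpos_of_nonpos_of_nonneg (by linarith)
        (sub_nonneg.2 (one_half_le_sigmoid_of_nonneg hβ))
    linarith

theorem linearization_lemma {ι : Type*} (β : ℝ) (hβ : 0 < β)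
    (V : Finset ι) (x z : ι → ℝ)
    (hx : ∀ i ∈ V, x i ∈ Set.Icc (0:ℝ) 1)
    (hz : ∀ i ∈ V, z i ∈ Set.Icc (0:ℝ) 1) :
    ∑ i ∈ V, (sigma β (x i - z i) - sigma β (-(z i)))
      ≥ ((∑ i ∈ V, x i - ∑ i ∈ V, z i) / 2) *
        ((1 - Real.exp (-β)) / (1 + Real.exp (-β))) := by
  calc ((∑ i ∈ V, x i - ∑ i ∈ V, z i) / 2) * ((1 - Real.exp (-β)) / (1 + Real.exp (-β)))
      = ∑ i ∈ V, (x i - z i) * (sigmoid β - 1 / 2) := by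
        rw [← Finset.sum_sub_distrib, ← Finset.sum_mul, sigmoid_sub_one_half]
        ring
    _ ≤ ∑ i ∈ V, (sigma β (x i - z i) - sigma β (-(z i))) :=
        Finset.sum_le_sum fun i hi =>
          mul_sigmoid_sub_one_half_le_sigma_sub hβ.le (hx i hi) (hz i hi).1
end

section
/- Let β ≥ 1 and let μ be a Borel probability measure on [0,1] × [0,1], with coordinates denoted (x, z). If ∫ σ_β(x − z) dμ ≥ 1/2, then ∫ z dμ ≤ (β/2) · (1 + exp(−β))/(1 − exp(−β)) · ∫ x dμ. -/
/-!
Put `d = σ_β(1) - 1/2`; then `(β/2)·(1 + e^{-β})/(1 - e^{-β}) = β/(4d)`. The odd function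
`t ↦ σ_β(t) - 1/2` has derivative `βσ_β(1 - σ_β) ≤ β/4`, which decreases on `[0, ∞)` as `σ_β` moves
away from `1/2`. So it lies above its chord `d·t` on `[0, 1]` and above `βt/4` for `t ≤ 0`, and
`d ≤ β/4`. For utilities `x, z ∈ [0, 1]` this gives `d·z - (β/4)·x ≤ 1/2 - σ_β(x - z)`; integrating
and using `∫ σ_β(x - z) dμ ≥ 1/2` yields `d·∫ z dμ ≤ (β/4)·∫ x dμ`.
-/

open MeasureTheory

open Real

section Logistic

variable {β t : ℝ}

lemma sigma_mem_Icc (β t : ℝ) : sigma β t ∈ Set.Icc 0 1 := by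
  have hden : 1 ≤ 1 + exp (-(β * t)) := le_add_of_nonneg_right (exp_pos _).le
  exact ⟨by unfold sigma; positivity, div_le_one_of_le₀ hden (by positivity)⟩

lemma sigma_zero (β : ℝ) : sigma β 0 = 1 / 2 := by
  norm_num [sigma]

lemma sigma_neg (β t : ℝ) : sigma β (-t) = 1 - sigma β t := by
  simp only [sigma, mul_neg, neg_neg, exp_neg]
  field_simp
  ring

lemma sigma_one_sub_half (β : ℝ) :
    sigma β 1 - 1 / 2 = (1 - exp (-β)) / (2 * (1 + exp (-β))) := by
  unfold sigma
  field_simp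
  ring

lemma hasDerivAt_sigma (β t : ℝ) :
    HasDerivAt (sigma β) (β * sigma β t * (1 - sigma β t)) t := by
  have hexp : HasDerivAt (fun t ↦ 1 + exp (-(β * t))) (exp (-(β * t)) * -β) t :=
    (((hasDerivAt_id t).const_mul β).neg.exp.const_add 1).congr_deriv (by simp)
  have hden : 1 + exp (-(β * t)) ≠ 0 := by positivity
  refine ((hasDerivAt_const t (1 : ℝ)).fun_div hexp hden).congr_deriv ?_
  simp only [sigma]
  field_simp
  ring

lemma sigma_sub_half_le (hβ : 0 ≤ β) (ht : 0 ≤ t) : sigma β t - 1 / 2 ≤ β * t / 4 := by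
  have hmono : Monotone fun t ↦ β * t / 4 - sigma β t := by
    have hderiv (t : ℝ) : HasDerivAt (fun t ↦ β * t / 4 - sigma β t)
        (β / 4 - β * sigma β t * (1 - sigma β t)) t :=
      (((hasDerivAt_id t).const_mul β).div_const 4).sub (hasDerivAt_sigma β t) |>.congr_deriv
        (by ring)
    refine monotone_of_deriv_nonneg (fun t ↦ (hderiv t).differentiableAt) (fun t ↦ ?_)
    rw [(hderiv t).deriv]
    nlinarith [sq_nonneg (sigma β t - 1 / 2)]
  have := hmono ht
  simp only [mul_zero, zero_div, zero_sub, sigma_zero] at this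
  linarith

lemma monotone_sigma (hβ : 0 ≤ β) : Monotone (sigma β) := by
  intro a b hab
  unfold sigma
  gcongr

lemma concaveOn_sigma (hβ : 0 ≤ β) : ConcaveOn ℝ (Set.Ici 0) (sigma β) := by
  refine AntitoneOn.concaveOn_of_deriv (convex_Ici 0)
    (fun t _ ↦ (hasDerivAt_sigma β t).continuousAt.continuousWithinAt)
    (fun t _ ↦ (hasDerivAt_sigma β t).differentiableAt.differentiableWithinAt) ?_
  intro a ha b hb hab
  simp only [interior_Ici, Set.mem_Ioi] at ha hb
  have hσa : 1 / 2 ≤ sigma β a := by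
    simpa only [sigma_zero] using monotone_sigma hβ ha.le
  have hσab := monotone_sigma hβ hab
  rw [(hasDerivAt_sigma β a).deriv, (hasDerivAt_sigma β b).deriv]
  nlinarith [mul_nonneg (sub_nonneg.2 hσab) (by linarith : 0 ≤ sigma β a + sigma β b - 1)]

lemma mul_sigma_one_sub_half_le (hβ : 0 ≤ β) (ht₀ : 0 ≤ t) (ht₁ : t ≤ 1) :
    (sigma β 1 - 1 / 2) * t ≤ sigma β t - 1 / 2 := by
  have := (concaveOn_sigma hβ).2 (Set.mem_Ici.2 zero_le_one) (Set.mem_Ici.2 le_rfl) ht₀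
    (sub_nonneg.2 ht₁) (add_sub_cancel t 1)
  simp only [smul_eq_mul, mul_zero, mul_one, add_zero, sigma_zero] at this
  linarith

lemma min_le_sigma_sub_half (hβ : 0 ≤ β) (ht : t ≤ 1) :
    min ((sigma β 1 - 1 / 2) * t) (β * t / 4) ≤ sigma β t - 1 / 2 := by
  rcases le_total 0 t with ht₀ | ht₀
  · exact min_le_of_left_le (mul_sigma_one_sub_half_le hβ ht₀ ht)
  · have := sigma_sub_half_le hβ (neg_nonneg.2 ht₀)
    rw [sigma_neg] at this
    exact min_le_of_right_le (by linarith)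

end Logistic

lemma mul_sub_mul_le_half_sub_sigma {β x z : ℝ} (hβ : 0 ≤ β) (hx : 0 ≤ x) (hz : 0 ≤ z)
    (hzx : z - x ≤ 1) :
    (sigma β 1 - 1 / 2) * z - β / 4 * x ≤ 1 / 2 - sigma β (x - z) := by
  have hd : sigma β 1 - 1 / 2 ≤ β / 4 := by simpa using sigma_sub_half_le hβ zero_le_one
  calc (sigma β 1 - 1 / 2) * z - β / 4 * x
      ≤ min ((sigma β 1 - 1 / 2) * (z - x)) (β * (z - x) / 4) :=
        le_min (by nlinarith) (by nlinarith)
    _ ≤ sigma β (z - x) - 1 / 2 := min_le_sigma_sub_half hβ hzx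
    _ = 1 / 2 - sigma β (x - z) := by rw [← neg_sub z x, sigma_neg]; ring

lemma mul_integral_snd_sub_le {β : ℝ} (hβ : 0 ≤ β) (μ : Measure (ℝ × ℝ))
    [IsProbabilityMeasure μ]
    (hsupp : ∀ᵐ p ∂μ, p.1 ∈ Set.Icc (0:ℝ) 1 ∧ p.2 ∈ Set.Icc (0:ℝ) 1) :
    (sigma β 1 - 1 / 2) * ∫ p, p.2 ∂μ - β / 4 * ∫ p, p.1 ∂μ
      ≤ 1 / 2 - ∫ p, sigma β (p.1 - p.2) ∂μ := by
  have hfst : Integrable (fun p : ℝ × ℝ ↦ p.1) μ :=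
    .of_mem_Icc 0 1 measurable_fst.aemeasurable (hsupp.mono fun _ hp ↦ hp.1)
  have hsnd : Integrable (fun p : ℝ × ℝ ↦ p.2) μ :=
    .of_mem_Icc 0 1 measurable_snd.aemeasurable (hsupp.mono fun _ hp ↦ hp.2)
  have hσ : Integrable (fun p : ℝ × ℝ ↦ sigma β (p.1 - p.2)) μ := by
    have hcont : Continuous (sigma β) :=
      continuous_iff_continuousAt.2 fun t ↦ (hasDerivAt_sigma β t).continuousAt
    exact .of_mem_Icc 0 1 (hcont.comp (continuous_fst.sub continuous_snd)).aemeasurable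
      (.of_forall fun _ ↦ sigma_mem_Icc β _)
  have hpointwise : ∀ᵐ p ∂μ, (sigma β 1 - 1 / 2) * p.2 - β / 4 * p.1
      ≤ 1 / 2 - sigma β (p.1 - p.2) :=
    hsupp.mono fun _ ⟨hx, hz⟩ ↦
      mul_sub_mul_le_half_sub_sigma hβ hx.1 hz.1 (by linarith [hx.1, hz.2])
  rw [← integral_const_mul, ← integral_const_mul,
    ← integral_sub (hsnd.const_mul _) (hfst.const_mul _)]
  calc _ ≤ ∫ p, (1 / 2 - sigma β (p.1 - p.2)) ∂μ :=
        integral_mono_ae ((hsnd.const_mul _).sub (hfst.const_mul _))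
          ((integrable_const _).sub hσ) hpointwise
    _ = _ := by rw [integral_sub (integrable_const _) hσ, integral_const]; simp

theorem two_candidate_upper_bound (β : ℝ) (hβ : 1 ≤ β)
    (μ : Measure (ℝ × ℝ)) [IsProbabilityMeasure μ]
    (hsupp : ∀ᵐ p ∂μ, p.1 ∈ Set.Icc (0:ℝ) 1 ∧ p.2 ∈ Set.Icc (0:ℝ) 1)
    (hwin : (∫ p, sigma β (p.1 - p.2) ∂μ) ≥ 1/2) :
    (∫ p, p.2 ∂μ) ≤ (β/2) * ((1 + Real.exp (-β)) / (1 - Real.exp (-β))) * (∫ p, p.1 ∂μ) := by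
  have hexp : exp (-β) < 1 := exp_lt_one_iff.2 (by linarith)
  have hd : 0 < sigma β 1 - 1 / 2 := by
    rw [sigma_one_sub_half]
    exact div_pos (by linarith) (by positivity)
  have hconst : β / 2 * ((1 + exp (-β)) / (1 - exp (-β))) = β / 4 / (sigma β 1 - 1 / 2) := by
    have hne : 1 - exp (-β) ≠ 0 := by linarith
    rw [sigma_one_sub_half]
    field_simp
    ring
  have := mul_integral_snd_sub_le (show 0 ≤ β by linarith) μ hsupp
  rw [hconst, div_mul_eq_mul_div, le_div_iff₀ hd]
  linarith
end

section
/- Let β > 0, let n ≥ 1, and let w_i, y_i, b_i ∈ [0,1] for i = 1, …, n. If ∑_{i=1}^n σ_β(w_i − y_i) ≥ n/2 and ∑_{i=1}^n σ_β(y_i − b_i) ≥ n/2, then (β/2) · ∑_{i=1}^n w_i ≥ (∑_{i=1}^n b_i − ∑_{i=1}^n y_i) · (1 − exp(−β))/(1 + exp(−β)). -/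
/-!
Write `σ` for the standard logistic function, so that `sigma β t = σ (β t)`. Since
`σ' = σ (1 - σ) ≤ 1/4`, moving from `-β y` to `β (w - y)` raises `σ` by at most `β w / 4`.
Since `σ'` decreases on `[0, ∞)`, `σ` is concave there and lies above its chord over `[0, β]`;
by the symmetry `σ (-x) = 1 - σ x` this bounds `σ (β (y - b))` when `b > y` by the chord of slope
`σ β - 1/2 = (1 - e^{-β}) / (2 (1 + e^{-β}))`. Adding the two bounds gives, voter by voter,
`σ (β (w - y)) + σ (β (y - b)) ≤ 1 + β w / 4 + (y - b) (σ β - 1/2)`, and summing this against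
the two majority hypotheses leaves the claim.
-/

open Real Set

namespace Real

lemma sigmoid_sub_sigmoid_le {x y : ℝ} (hxy : x ≤ y) : sigmoid y - sigmoid x ≤ (y - x) / 4 := by
  have hderiv : ∀ z, deriv sigmoid z ≤ 1 / 4 := fun z => by
    rw [deriv_sigmoid]
    nlinarith [sq_nonneg (sigmoid z - 1 / 2)]
  linarith [image_sub_le_mul_sub_of_deriv_le differentiable_sigmoid hderiv hxy]

lemma half_le_sigmoid {x : ℝ} (hx : 0 ≤ x) : 1 / 2 ≤ sigmoid x := by
  simpa [sigmoid_zero] using sigmoid_le hx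

lemma concaveOn_sigmoid : ConcaveOn ℝ (Ici 0) sigmoid := by
  refine AntitoneOn.concaveOn_of_deriv (convex_Ici 0) continuous_sigmoid.continuousOn
    differentiable_sigmoid.differentiableOn ?_
  rw [interior_Ici, deriv_sigmoid]
  intro x hx z _ hxz
  have hx' := half_le_sigmoid (le_of_lt hx)
  have hmono := sigmoid_le hxz
  dsimp only
  nlinarith

lemma chord_le_sigmoid_mul {x u : ℝ} (hx : 0 ≤ x) (hu₀ : 0 ≤ u) (hu₁ : u ≤ 1) :
    1 / 2 + u * (sigmoid x - 1 / 2) ≤ sigmoid (u * x) := by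
  have h := concaveOn_sigmoid.2 self_mem_Ici (mem_Ici.2 hx) (sub_nonneg.2 hu₁) hu₀
    (sub_add_cancel 1 u)
  simp only [smul_eq_mul, mul_zero, zero_add, sigmoid_zero] at h
  linarith

lemma two_mul_sigmoid_sub_one (x : ℝ) :
    2 * sigmoid x - 1 = (1 - exp (-x)) / (1 + exp (-x)) := by
  rw [sigmoid_def]
  field_simp
  ring

end Real

lemma sigmoid_add_sigmoid_le {β w y b : ℝ} (hβ : 0 ≤ β) (hw : 0 ≤ w) (hy : 0 ≤ y) (hb₀ : 0 ≤ b)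
    (hb₁ : b ≤ 1) :
    sigmoid (β * (w - y)) + sigmoid (β * (y - b)) ≤
      1 + β * w / 4 + (y - b) * (sigmoid β - 1 / 2) := by
  have hy' : 1 / 2 ≤ sigmoid (β * y) := half_le_sigmoid (mul_nonneg hβ hy)
  have hfirst : sigmoid (β * (w - y)) ≤ 1 - sigmoid (β * y) + β * w / 4 := by
    have h := sigmoid_sub_sigmoid_le (x := -(β * y)) (y := β * (w - y)) (by nlinarith)
    rw [sigmoid_neg] at h
    linarith
  have hsecond : sigmoid (β * (y - b)) ≤ sigmoid (β * y) + (y - b) * (sigmoid β - 1 / 2) := by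
    rcases le_total b y with hby | hyb
    · have hmono : sigmoid (β * (y - b)) ≤ sigmoid (β * y) := sigmoid_le (by nlinarith)
      nlinarith [half_le_sigmoid hβ]
    · have hchord := chord_le_sigmoid_mul hβ (sub_nonneg.2 hyb) (by linarith : b - y ≤ 1)
      rw [show β * (y - b) = -((b - y) * β) by ring, sigmoid_neg]
      linarith
  linarith

theorem copeland_core_inequality_general (β : ℝ) (hβ : 0 < β) (n : ℕ)
    (w y b : Fin n → ℝ)
    (hw : ∀ i, w i ∈ Set.Icc (0:ℝ) 1)
    (hy : ∀ i, y i ∈ Set.Icc (0:ℝ) 1)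
    (hb : ∀ i, b i ∈ Set.Icc (0:ℝ) 1)
    (h1 : ∑ i, sigma β (w i - y i) ≥ (n : ℝ) / 2)
    (h2 : ∑ i, sigma β (y i - b i) ≥ (n : ℝ) / 2) :
    (β / 2) * ∑ i, w i ≥
      (∑ i, b i - ∑ i, y i) * ((1 - Real.exp (-β)) / (1 + Real.exp (-β))) := by
  simp only [sigma_eq_sigmoid] at h1 h2
  have hsum := Finset.sum_le_sum fun i (_ : i ∈ Finset.univ) =>
    sigmoid_add_sigmoid_le hβ.le (hw i).1 (hy i).1 (hb i).1 (hb i).2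
  simp only [Finset.sum_add_distrib, ← Finset.sum_div, ← Finset.mul_sum, ← Finset.sum_mul,
    Finset.sum_sub_distrib, Finset.sum_const, Finset.card_univ, Fintype.card_fin,
    nsmul_eq_mul, mul_one] at hsum
  rw [← two_mul_sigmoid_sub_one]
  linarith

theorem copeland_core_inequality (β : ℝ) (hβ : 0 < β) (n : ℕ) (hn : 1 ≤ n)
    (w y b : Fin n → ℝ)
    (hw : ∀ i, w i ∈ Set.Icc (0:ℝ) 1)
    (hy : ∀ i, y i ∈ Set.Icc (0:ℝ) 1)
    (hb : ∀ i, b i ∈ Set.Icc (0:ℝ) 1)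
    (h1 : ∑ i, sigma β (w i - y i) ≥ (n : ℝ) / 2)
    (h2 : ∑ i, sigma β (y i - b i) ≥ (n : ℝ) / 2) :
    (β / 2) * ∑ i, w i ≥
      (∑ i, b i - ∑ i, y i) * ((1 - Real.exp (-β)) / (1 + Real.exp (-β))) :=
  copeland_core_inequality_general β hβ n w y b hw hy hb h1 h2
end

section
/- Let β ≥ 1, let m ≥ 2 be an integer, let μ be a Borel probability measure on the cube [0,1]^m (a utility vector u = (u_1, …, u_m)), and let W, B ∈ {1, …, m}. Suppose ∫ exp(β·u_W) / (∑_{k=1}^m exp(β·u_k)) dμ ≥ ∫ exp(β·u_B) / (∑_{k=1}^m exp(β·u_k)) dμ. Then ∫ u_B dμ ≤ min( m·exp(β)/(ln(m−1) + 2) + 1, exp(2β)/β ) · ∫ u_W dμ. -/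
open MeasureTheory Real

/-!
Write `a = e^(β u_W)`, `b = e^(β u_B)`, `S = ∑ₖ e^(β u_k)` and `m` for the number of candidates.
On the cube every `e^(β u_k)` lies in `[1, e^β]`, so `a + m - 1 ≤ S ≤ m e^β` and pointwise
`(b - a)⁺ / (m e^β) ≤ (b/S - a/S) + (a - 1)/(a + m - 1)`. Integrating, the hypothesis makes the
first term nonpositive, so `∫ (b - a)⁺ ≤ m e^β ∫ (a - 1)/(a + m - 1)`.

Both bounds come from this. Since `(b - a)⁺ ≥ β (u_B - u_W)` and
`(a - 1)/(a + m - 1) ≤ β u_W / (log (m - 1) + 2)`, we get the first. Since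
`β u_B ≤ (b - a)⁺ + (a - 1)`, `(a - 1)/(a + m - 1) ≤ (a - 1)/m` and, by convexity of `exp`,
`a - 1 ≤ (e^β - 1) u_W`, we get `β ∫ u_B ≤ (e^(2β) - 1) ∫ u_W`.
-/

lemma log_add_two_mul_exp_sub_one_le {c : ℝ} (hc : 0 < c) {x : ℝ} (hx : 0 ≤ x) :
    (log c + 2) * (exp x - 1) ≤ x * (exp x + c) := by
  set F : ℝ → ℝ := fun t => t * (exp t + c) - (log c + 2) * (exp t - 1)
  have hF : ∀ t, HasDerivAt F (exp t * (t - log c - 1) + c) t := fun t => by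
    refine (((hasDerivAt_id' t).mul ((hasDerivAt_exp t).add_const c)).sub
      (((hasDerivAt_exp t).sub_const 1).const_mul (log c + 2))).congr_deriv ?_
    ring
  -- `F' ≥ 0` is `e^(log c - t) ≥ (log c - t) + 1` multiplied by `e^t`.
  have hF' : ∀ t, 0 ≤ deriv F t := fun t => by
    have h := mul_le_mul_of_nonneg_left (add_one_le_exp (log c - t)) (exp_pos t).le
    rw [← exp_add, add_sub_cancel, exp_log hc] at h
    rw [(hF t).deriv]; linarith
  have := monotone_of_deriv_nonneg (fun t => (hF t).differentiableAt) hF' hx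
  simp only [F, exp_zero] at this
  linarith

lemma exp_sub_one_div_exp_add_le {c : ℝ} (hc : 1 ≤ c) {x : ℝ} (hx : 0 ≤ x) :
    (exp x - 1) / (exp x + c) ≤ x / (log c + 2) := by
  have hL : 0 < log c + 2 := by linarith [log_nonneg hc]
  rw [div_le_div_iff₀ (by positivity) hL, mul_comm]
  exact log_add_two_mul_exp_sub_one_le (by linarith) hx

lemma exp_mul_le_one_add_mul (β : ℝ) {x : ℝ} (hx₀ : 0 ≤ x) (hx₁ : x ≤ 1) :
    exp (β * x) ≤ 1 + (exp β - 1) * x := by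
  have h := convexOn_exp.2 (Set.mem_univ 0) (Set.mem_univ β) (sub_nonneg.2 hx₁) hx₀
    (sub_add_cancel 1 x)
  simp only [smul_eq_mul, mul_zero, zero_add, exp_zero, mul_one] at h
  rw [mul_comm x β] at h
  linarith

lemma sub_le_max_exp_sub_exp {x : ℝ} (hx : 0 ≤ x) (y : ℝ) :
    y - x ≤ max (exp y - exp x) 0 := by
  rcases le_total y x with hyx | hxy
  · exact (sub_nonpos.2 hyx).trans (le_max_right _ _)
  · refine le_trans ?_ (le_max_left _ _)
    have h := mul_le_mul_of_nonneg_right (add_one_le_exp (y - x)) (exp_pos x).le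
    rw [← exp_add, sub_add_cancel] at h
    nlinarith [one_le_exp hx]

lemma exp_mul_mem_Icc {β x : ℝ} (hβ : 0 ≤ β) (hx : x ∈ Set.Icc (0 : ℝ) 1) :
    exp (β * x) ∈ Set.Icc 1 (exp β) :=
  ⟨one_le_exp (mul_nonneg hβ hx.1), exp_le_exp.2 (mul_le_of_le_one_right hβ hx.2)⟩

lemma max_sub_div_card_mul_le {ι : Type*} [Fintype ι] {v : ι → ℝ} {E : ℝ}
    (hv : ∀ k, v k ∈ Set.Icc 1 E) (W B : ι) :
    max (v B - v W) 0 / (Fintype.card ι * E) ≤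
      (v B / ∑ k, v k - v W / ∑ k, v k) + (v W - 1) / (v W + (Fintype.card ι - 1)) := by
  set S := ∑ k, v k
  have hSE : S ≤ Fintype.card ι * E := by
    simpa using Finset.sum_le_card_nsmul Finset.univ v E fun k _ => (hv k).2
  have hWS : v W + (Fintype.card ι - 1) ≤ S := by
    have := Finset.single_le_sum (f := fun k => v k - 1) (fun k _ => sub_nonneg.2 (hv k).1)
      (Finset.mem_univ W)
    simp only [Finset.sum_sub_distrib, Finset.sum_const, Finset.card_univ, nsmul_eq_mul,
      mul_one] at this
    linarith
  have hcard : (1 : ℝ) ≤ Fintype.card ι := Nat.one_le_cast.2 (Fintype.card_pos_iff.2 ⟨W⟩)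
  have hW := (hv W).1
  have hS : 0 < S := by linarith
  rw [← sub_div]
  rcases le_total (v W) (v B) with h | h
  · rw [max_eq_left (sub_nonneg.2 h)]
    have h₁ := div_le_div_of_nonneg_left (sub_nonneg.2 h) hS hSE
    have h₂ : 0 ≤ (v W - 1) / (v W + (Fintype.card ι - 1)) :=
      div_nonneg (by linarith) (by linarith)
    linarith
  · rw [max_eq_right (sub_nonpos.2 h), zero_div, ← neg_sub, neg_div]
    have h₁ := div_le_div_of_nonneg_right (sub_le_sub_left (hv B).1 (v W)) hS.le
    have h₂ := div_le_div_of_nonneg_left (sub_nonneg.2 hW) (by linarith) hWS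
    linarith

theorem integrable_of_continuous_of_ae_mem_Icc {ι : Type*} [Fintype ι] {μ : Measure (ι → ℝ)}
    [IsFiniteMeasure μ] (hμ : ∀ᵐ u ∂μ, ∀ j, u j ∈ Set.Icc (0 : ℝ) 1) {f : (ι → ℝ) → ℝ}
    (hf : Continuous f) : Integrable f μ := by
  rw [← Measure.restrict_eq_self_of_ae_mem (s := Set.Icc 0 1)
    (hμ.mono fun u hu => ⟨fun j => (hu j).1, fun j => (hu j).2⟩)]
  exact hf.continuousOn.integrableOn_Icc

section PlackettLuce

variable {ι : Type*} [Fintype ι]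

noncomputable def firstChoiceProb (β : ℝ) (u : ι → ℝ) (j : ι) : ℝ :=
  exp (β * u j) / ∑ k, exp (β * u k)

variable {μ : Measure (ι → ℝ)} [IsProbabilityMeasure μ] {β : ℝ}

theorem integral_max_exp_sub_exp_le (hμ : ∀ᵐ u ∂μ, ∀ j, u j ∈ Set.Icc (0 : ℝ) 1)
    (hβ : 0 ≤ β) {W B : ι} (h : ∫ u, firstChoiceProb β u B ∂μ ≤ ∫ u, firstChoiceProb β u W ∂μ) :
    ∫ u, max (exp (β * u B) - exp (β * u W)) 0 ∂μ ≤
      Fintype.card ι * exp β *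
        ∫ u, (exp (β * u W) - 1) / (exp (β * u W) + (Fintype.card ι - 1)) ∂μ := by
  have hcard : (1 : ℝ) ≤ Fintype.card ι := Nat.one_le_cast.2 (Fintype.card_pos_iff.2 ⟨W⟩)
  have : Nonempty ι := ⟨W⟩
  have hpt := hμ.mono fun u hu =>
    max_sub_div_card_mul_le (fun k => exp_mul_mem_Icc hβ (hu k)) W B
  have hint : ∀ f, Continuous f → Integrable f μ := fun f =>
    integrable_of_continuous_of_ae_mem_Icc hμ
  have hmono := integral_mono_ae (hint _ (by fun_prop))
    (hint _ (by fun_prop (disch := intro; positivity))) hpt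
  rw [integral_div, integral_add, integral_sub, div_le_iff₀ (by positivity)] at hmono
  · unfold firstChoiceProb at h
    have hcE : (0 : ℝ) ≤ Fintype.card ι * exp β := by positivity
    linarith [mul_nonneg (sub_nonneg.2 h) hcE]
  all_goals exact hint _ (by fun_prop (disch := intro; positivity))

theorem integral_apply_le_exp_two_mul_div_mul (hμ : ∀ᵐ u ∂μ, ∀ j, u j ∈ Set.Icc (0 : ℝ) 1)
    (hβ : 0 < β) {W B : ι}
    (h : ∫ u, firstChoiceProb β u B ∂μ ≤ ∫ u, firstChoiceProb β u W ∂μ) :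
    ∫ u, u B ∂μ ≤ exp (2 * β) / β * ∫ u, u W ∂μ := by
  have hcard : (1 : ℝ) ≤ Fintype.card ι := Nat.one_le_cast.2 (Fintype.card_pos_iff.2 ⟨W⟩)
  have hint : ∀ f, Continuous f → Integrable f μ := fun f =>
    integrable_of_continuous_of_ae_mem_Icc hμ
  have hB : ∀ᵐ u ∂μ, β * u B ≤ max (exp (β * u B) - exp (β * u W)) 0 + (exp (β * u W) - 1) :=
    ae_of_all _ fun u => by
      linarith [add_one_le_exp (β * u B), le_max_left (exp (β * u B) - exp (β * u W)) 0]
  have hW : ∀ᵐ u ∂μ, Fintype.card ι * exp β *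
      ((exp (β * u W) - 1) / (exp (β * u W) + (Fintype.card ι - 1))) + (exp (β * u W) - 1) ≤
        (exp β + 1) * (exp β - 1) * u W := hμ.mono fun u hu => by
    have ha := (exp_mul_mem_Icc hβ.le (hu W)).1
    have hψ : (exp (β * u W) - 1) / (exp (β * u W) + (Fintype.card ι - 1)) * Fintype.card ι ≤
        exp (β * u W) - 1 := by
      rw [div_mul_eq_mul_div, div_le_iff₀ (by linarith)]
      nlinarith
    have hchord := exp_mul_le_one_add_mul β (hu W).1 (hu W).2
    nlinarith [exp_pos β]
  have hB' := integral_mono_ae (hint _ (by fun_prop)) (hint _ (by fun_prop)) hB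
  have hW' := integral_mono_ae (hint _ (by fun_prop (disch := intro; positivity)))
    (hint _ (by fun_prop)) hW
  rw [integral_const_mul, integral_add] at hB'
  rw [integral_add, integral_const_mul, integral_const_mul] at hW'
  · have hkey := integral_max_exp_sub_exp_le hμ hβ.le h
    have hIW : 0 ≤ ∫ u, u W ∂μ := integral_nonneg_of_ae (hμ.mono fun u hu => (hu W).1)
    rw [div_mul_eq_mul_div, le_div_iff₀ hβ, two_mul, exp_add]
    linarith
  all_goals exact hint _ (by fun_prop (disch := intro; positivity))

theorem integral_apply_le_card_mul_exp_div_log_mul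
    (hμ : ∀ᵐ u ∂μ, ∀ j, u j ∈ Set.Icc (0 : ℝ) 1) (hβ : 0 < β) (hcard : 2 ≤ Fintype.card ι)
    {W B : ι} (h : ∫ u, firstChoiceProb β u B ∂μ ≤ ∫ u, firstChoiceProb β u W ∂μ) :
    ∫ u, u B ∂μ ≤
      (Fintype.card ι * exp β / (log (Fintype.card ι - 1) + 2) + 1) * ∫ u, u W ∂μ := by
  have hc : (1 : ℝ) ≤ Fintype.card ι - 1 := by
    have : (2 : ℝ) ≤ Fintype.card ι := by exact_mod_cast hcard
    linarith
  have hL : 0 < log (Fintype.card ι - 1) + 2 := by linarith [log_nonneg hc]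
  have hint : ∀ f, Continuous f → Integrable f μ := fun f =>
    integrable_of_continuous_of_ae_mem_Icc hμ
  have hBW : ∀ᵐ u ∂μ, β * u B - β * u W ≤ max (exp (β * u B) - exp (β * u W)) 0 :=
    hμ.mono fun u hu => sub_le_max_exp_sub_exp (mul_nonneg hβ.le (hu W).1) _
  have hψ : ∀ᵐ u ∂μ, (exp (β * u W) - 1) / (exp (β * u W) + (Fintype.card ι - 1)) ≤
      β / (log (Fintype.card ι - 1) + 2) * u W := hμ.mono fun u hu =>
    (exp_sub_one_div_exp_add_le hc (mul_nonneg hβ.le (hu W).1)).trans_eq (by ring)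
  have hBW' := integral_mono_ae (hint _ (by fun_prop)) (hint _ (by fun_prop)) hBW
  have hψ' := integral_mono_ae (hint _ (by fun_prop (disch := intro; positivity)))
    (hint _ (by fun_prop)) hψ
  rw [integral_sub, integral_const_mul, integral_const_mul] at hBW'
  rw [integral_const_mul] at hψ'
  · have hkey := integral_max_exp_sub_exp_le hμ hβ.le h
    have hcE : (0 : ℝ) ≤ Fintype.card ι * exp β := by positivity
    have hψ'' := mul_le_mul_of_nonneg_left hψ' hcE
    refine le_of_mul_le_mul_left ?_ hβ
    linarith [show Fintype.card ι * exp β * (β / (log (Fintype.card ι - 1) + 2) *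
      ∫ u, u W ∂μ) = β * (Fintype.card ι * exp β / (log (Fintype.card ι - 1) + 2) *
        ∫ u, u W ∂μ) by ring]
  all_goals exact hint _ (by fun_prop)

end PlackettLuce

theorem plurality_upper_bound (β : ℝ) (hβ : 1 ≤ β) (m : ℕ) (hm : 2 ≤ m)
    (μ : Measure (Fin m → ℝ)) [IsProbabilityMeasure μ]
    (hsupp : ∀ᵐ u ∂μ, ∀ j, u j ∈ Set.Icc (0:ℝ) 1)
    (W B : Fin m)
    (h : (∫ u, Real.exp (β * u W) / (∑ k, Real.exp (β * u k)) ∂μ)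
       ≥ (∫ u, Real.exp (β * u B) / (∑ k, Real.exp (β * u k)) ∂μ)) :
    (∫ u, u B ∂μ) ≤
      min ((m : ℝ) * Real.exp β / (Real.log ((m : ℝ) - 1) + 2) + 1)
          (Real.exp (2 * β) / β) * (∫ u, u W ∂μ) := by
  have hβ₀ : 0 < β := by linarith
  have hIW : 0 ≤ ∫ u, u W ∂μ := integral_nonneg_of_ae (hsupp.mono fun u hu => (hu W).1)
  rw [min_mul_of_nonneg _ _ hIW]
  refine le_min ?_ (integral_apply_le_exp_two_mul_div_mul hsupp hβ₀ h)
  simpa only [Fintype.card_fin] using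
    integral_apply_le_card_mul_exp_div_log_mul hsupp hβ₀ (by simpa only [Fintype.card_fin]) h
end

section
/- For every real a ≥ 1 and every real x ≥ 0, (exp(x) − 1)/(exp(x) + a) ≤ x/(ln a + 2). -/
/-!
Clearing denominators, the claim is `h x ≥ 0` for `h x = x (eˣ + a) - (eˣ - 1)(log a + 2)`.
Since `h 0 = 0`, it suffices that `h' x = eˣ (x - log a - 1) + a` is nonnegative; writing
`t = x - log a` this is `a (1 - (1 - t) eᵗ)`, and `(1 - t) eᵗ ≤ 1` is `1 - t ≤ e⁻ᵗ`.
-/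

open Real

theorem one_sub_mul_exp_le_one (t : ℝ) : (1 - t) * exp t ≤ 1 :=
  calc (1 - t) * exp t ≤ exp (-t) * exp t := by gcongr; linarith [add_one_le_exp (-t)]
    _ = 1 := by rw [← exp_add, neg_add_cancel, exp_zero]

theorem exp_mul_sub_log_sub_one_add_nonneg {a : ℝ} (ha : 0 < a) (y : ℝ) :
    0 ≤ exp y * (y - log a - 1) + a := by
  have hsplit : exp y * (y - log a - 1) + a
      = a * (1 - (1 - (y - log a)) * exp (y - log a)) := by
    rw [exp_sub, exp_log ha]
    field_simp
    ring
  rw [hsplit]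
  exact mul_nonneg ha.le (sub_nonneg.2 (one_sub_mul_exp_le_one _))

theorem hasDerivAt_mul_exp_add_sub_exp_sub_one_mul (a c y : ℝ) :
    HasDerivAt (fun x => x * (exp x + a) - (exp x - 1) * c) (exp y * (y - c + 1) + a) y := by
  have h : HasDerivAt (fun x => x * (exp x + a) - (exp x - 1) * c)
      (1 * (exp y + a) + y * exp y - exp y * c) y :=
    ((hasDerivAt_id' y).mul ((hasDerivAt_exp y).add_const a)).sub
      (((hasDerivAt_exp y).sub_const 1).mul_const c)
  exact h.congr_deriv (by ring)

theorem exp_sub_one_mul_le_mul_exp_add {a x : ℝ} (ha : 0 < a) (hx : 0 ≤ x) :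
    (exp x - 1) * (log a + 2) ≤ x * (exp x + a) := by
  have hmono : Monotone fun x => x * (exp x + a) - (exp x - 1) * (log a + 2) :=
    monotone_of_hasDerivAt_nonneg (hasDerivAt_mul_exp_add_sub_exp_sub_one_mul a _) fun y =>
      (exp_mul_sub_log_sub_one_add_nonneg ha y).trans_eq (by ring)
  have h := hmono hx
  simp only [exp_zero, sub_self, zero_mul] at h
  linarith

theorem exp_ratio_le_linear (a x : ℝ) (ha : 1 ≤ a) (hx : 0 ≤ x) :
    (Real.exp x - 1) / (Real.exp x + a) ≤ x / (Real.log a + 2) := by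
  have ha0 : 0 < a := one_pos.trans_le ha
  have hlog : 0 < log a + 2 := by linarith [log_nonneg ha]
  rw [div_le_div_iff₀ (by positivity) hlog]
  exact exp_sub_one_mul_le_mul_exp_add ha0 hx
end

section
/- Let β > 0 and let a be a real number with a ≥ exp(β). Then for every w ∈ [0,1], (exp(β·w) − 1)/(exp(β·w) + a) ≤ w · (exp(β) − 1)/(exp(β) + a). -/
/-!
The map `φ y = (exp y - 1) / (exp y + a)` has
`φ'' y = (a + 1) exp y (a - exp y) / (exp y + a) ^ 3`, so it is convex on `y ≤ log a`,
an interval containing `0` and `β` once `exp β ≤ a`.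
Convexity together with `φ 0 = 0` gives `φ (w β) ≤ w φ β` for `w ∈ [0, 1]`.
-/

open Real Set

theorem ConvexOn.map_smul_le_smul {𝕜 E β : Type*}
    [Field 𝕜] [LinearOrder 𝕜] [IsStrictOrderedRing 𝕜] [AddCommMonoid E] [Module 𝕜 E]
    [AddCommMonoid β] [PartialOrder β] [IsOrderedAddMonoid β] [Module 𝕜 β] [PosSMulMono 𝕜 β]
    {s : Set E} {f : E → β} (hf : ConvexOn 𝕜 s f) (h0 : (0 : E) ∈ s) (hf0 : f 0 ≤ 0)
    {x : E} (hx : x ∈ s) {t : 𝕜} (ht0 : 0 ≤ t) (ht1 : t ≤ 1) :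
    f (t • x) ≤ t • f x := by
  have hchord := hf.2 hx h0 ht0 (sub_nonneg.2 ht1) (add_sub_cancel t 1)
  rw [smul_zero, add_zero] at hchord
  exact hchord.trans <|
    add_le_of_nonpos_right (smul_nonpos_of_nonneg_of_nonpos (sub_nonneg.2 ht1) hf0)

theorem hasDerivAt_exp_sub_one_div_exp_add {a : ℝ} (ha : 0 < a) (y : ℝ) :
    HasDerivAt (fun y => (exp y - 1) / (exp y + a)) ((a + 1) * exp y / (exp y + a) ^ 2) y := by
  have hden : exp y + a ≠ 0 := by positivity
  refine (((hasDerivAt_exp y).sub_const 1).fun_div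
    ((hasDerivAt_exp y).add_const a) hden).congr_deriv ?_
  field_simp
  ring

theorem hasDerivAt_mul_exp_div_exp_add_sq {a : ℝ} (ha : 0 < a) (y : ℝ) :
    HasDerivAt (fun y => (a + 1) * exp y / (exp y + a) ^ 2)
      ((a + 1) * exp y * (a - exp y) / (exp y + a) ^ 3) y := by
  have hden : exp y + a ≠ 0 := by positivity
  refine (((hasDerivAt_exp y).const_mul (a + 1)).fun_div
    (((hasDerivAt_exp y).add_const a).fun_pow 2) (pow_ne_zero 2 hden)).congr_deriv ?_
  field_simp
  ring

theorem convexOn_exp_sub_one_div_exp_add {a : ℝ} (ha : 0 < a) :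
    ConvexOn ℝ (Iic (log a)) (fun y => (exp y - 1) / (exp y + a)) := by
  refine convexOn_of_hasDerivWithinAt2_nonneg (convex_Iic _)
    (fun y _ => (hasDerivAt_exp_sub_one_div_exp_add ha y).continuousAt.continuousWithinAt)
    (fun y _ => (hasDerivAt_exp_sub_one_div_exp_add ha y).hasDerivWithinAt)
    (fun y _ => (hasDerivAt_mul_exp_div_exp_add_sq ha y).hasDerivWithinAt) ?_
  intro y hy
  rw [interior_Iic] at hy
  have hexp : 0 ≤ a - exp y := sub_nonneg.2 ((lt_log_iff_exp_lt ha).1 hy).le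
  positivity

theorem convex_chord_bound (β a : ℝ) (hβ : 0 < β) (ha : Real.exp β ≤ a)
    (w : ℝ) (hw : w ∈ Set.Icc (0:ℝ) 1) :
    (Real.exp (β * w) - 1) / (Real.exp (β * w) + a)
      ≤ w * ((Real.exp β - 1) / (Real.exp β + a)) := by
  have ha0 : 0 < a := (exp_pos β).trans_le ha
  have hβa : β ≤ log a := (le_log_iff_exp_le ha0).2 ha
  have h0 : (0 : ℝ) ∈ Iic (log a) := hβ.le.trans hβa
  simpa [mul_comm] using
    (convexOn_exp_sub_one_div_exp_add ha0).map_smul_le_smul h0 (by simp) hβa hw.1 hw.2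
end

section
/- Let m ≥ 4 be an integer, let β ≥ ln 4 be a real number, let ε ∈ (0, 1], and set γ = (2 + ε)/min(exp(β), m). Then 0 < γ < 1, γ · exp(β)/(exp(β) + m − 1) ≥ (2 + ε)/(2m) > 1/m, and (1 − γ)/γ = min(exp(β), m)/(2 + ε) − 1. -/
theorem plurality_lb_construction (m : ℕ) (hm : 4 ≤ m) (β : ℝ) (hβ : Real.log 4 ≤ β)
    (ε : ℝ) (hε : ε ∈ Set.Ioc (0:ℝ) 1) :
    let γ : ℝ := (2 + ε) / min (Real.exp β) (m : ℝ)
    0 < γ ∧ γ < 1 ∧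
    γ * Real.exp β / (Real.exp β + (m : ℝ) - 1) ≥ (2 + ε) / (2 * m) ∧
    (2 + ε) / (2 * m) > 1 / (m : ℝ) ∧
    (1 - γ) / γ = min (Real.exp β) (m : ℝ) / (2 + ε) - 1 := by
  intro γ
  obtain ⟨hε0, hε1⟩ := hε
  have hm4 : (4:ℝ) ≤ m := by exact_mod_cast hm
  have he : (4:ℝ) ≤ Real.exp β := by
    rw [← Real.exp_log (by norm_num : (0:ℝ) < 4)]
    exact Real.exp_le_exp.mpr hβ
  have hmin : (4:ℝ) ≤ min (Real.exp β) (m : ℝ) := le_min he hm4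
  have hminpos : (0:ℝ) < min (Real.exp β) (m : ℝ) := by linarith
  have hme : min (Real.exp β) (m : ℝ) ≤ Real.exp β := min_le_left _ _
  have hmm : min (Real.exp β) (m : ℝ) ≤ (m : ℝ) := min_le_right _ _
  have hγpos : 0 < γ := div_pos (by linarith) hminpos
  have hγlt : γ < 1 := (div_lt_one hminpos).mpr (by linarith)
  refine ⟨hγpos, hγlt, ?_, ?_, ?_⟩
  · rw [ge_iff_le, div_le_div_iff₀ (by positivity) (by linarith)]
    show (2 + ε) * (Real.exp β + (m : ℝ) - 1) ≤
      (2 + ε) / min (Real.exp β) (m : ℝ) * Real.exp β * (2 * m)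
    rw [div_mul_eq_mul_div, div_mul_eq_mul_div, le_div_iff₀ hminpos]
    nlinarith [mul_le_mul_of_nonneg_left hmm (Real.exp_pos β).le,
      mul_le_mul_of_nonneg_right hme (by linarith : (0:ℝ) ≤ (m:ℝ) - 1)]
  · rw [gt_iff_lt, div_lt_div_iff₀ (by linarith) (by linarith)]
    nlinarith
  · have hγne : γ ≠ 0 := ne_of_gt hγpos
    rw [sub_div, div_self hγne]
    show 1 / ((2 + ε) / min (Real.exp β) (m : ℝ)) - 1 = _
    rw [one_div_div]
end

section
/- Let m ≥ 10 be an integer and let β be a real number satisfying β ≤ m/(3·ln m) and β ≥ 2·ln β + 2·ln(ln m). Then (1/2) · 1/(1 + (m − 1)·exp(2/ln m)) + (1/2) · exp(β/2) / ( exp(β/2) + ⌊(m−1)/(β·ln m)⌋·exp(β) + (m − 1) − ⌊(m−1)/(β·ln m)⌋ ) ≤ 5/(4m). -/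
set_option maxHeartbeats 1000000 in
theorem plurality_veto_top_vote_bound (m : ℕ) (hm : 10 ≤ m) (β : ℝ)
    (hβ_ub : β ≤ (m : ℝ) / (3 * Real.log m))
    (hβ_lb : β ≥ 2 * Real.log β + 2 * Real.log (Real.log m)) :
    (1/2) * (1 / (1 + ((m : ℝ) - 1) * Real.exp (2 / Real.log m)))
    + (1/2) * (Real.exp (β / 2) /
        (Real.exp (β / 2)
          + (⌊((m : ℝ) - 1) / (β * Real.log m)⌋₊ : ℝ) * Real.exp β
          + ((m : ℝ) - 1) - (⌊((m : ℝ) - 1) / (β * Real.log m)⌋₊ : ℝ)))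
    ≤ 5 / (4 * (m : ℝ)) := by
  have hm10 : (10:ℝ) ≤ m := by exact_mod_cast hm
  have hm1 : (1:ℝ) < m := by linarith
  have hL : 0 < Real.log m := Real.log_pos hm1
  -- first term
  have hE : (1:ℝ) ≤ Real.exp (2 / Real.log m) := Real.one_le_exp (by positivity)
  have hden1 : (m:ℝ) ≤ 1 + ((m:ℝ) - 1) * Real.exp (2 / Real.log m) := by nlinarith
  have h1 : 1 / (1 + ((m:ℝ) - 1) * Real.exp (2 / Real.log m)) ≤ 1 / m :=
    one_div_le_one_div_of_le (by linarith) hden1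
  set s := Real.exp (β/2) with hs
  have hs_pos : 0 < s := Real.exp_pos _
  set k : ℝ := (⌊((m : ℝ) - 1) / (β * Real.log m)⌋₊ : ℝ) with hk
  -- second term bound: s / D ≤ 3/(2m)
  have h2 : s / (s + k * Real.exp β + ((m:ℝ)-1) - k) ≤ 3 / (2*m) := by
    rcases le_or_gt β 0 with hβ | hβ
    · have hk0 : k = 0 := by
        have hfl : ⌊((m : ℝ) - 1) / (β * Real.log m)⌋₊ = 0 := by
          rcases lt_or_eq_of_le hβ with h | h
          · exact Nat.floor_of_nonpos (le_of_lt (div_neg_of_pos_of_neg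
              (by linarith : (0:ℝ) < (m:ℝ) - 1) (mul_neg_of_neg_of_pos h hL)))
          · rw [h, zero_mul, div_zero, Nat.floor_zero]
        rw [hk, hfl]; norm_num
      have hs1 : s ≤ 1 := Real.exp_le_one_iff.mpr (by linarith)
      rw [hk0]
      rw [div_le_div_iff₀ (by nlinarith) (by linarith)]
      nlinarith
    · -- β > 0
      have hs1 : 1 ≤ s := Real.one_le_exp (by linarith)
      have hsq : Real.exp β = s * s := by rw [hs, ← Real.exp_add]; ring_nf
      set t := β * Real.log m with ht
      have ht_pos : 0 < t := mul_pos hβ hL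
      have hst : t ≤ s := by
        have hlog : Real.log t = Real.log β + Real.log (Real.log m) :=
          Real.log_mul (ne_of_gt hβ) (ne_of_gt hL)
        have hlt : Real.log t ≤ β/2 := by rw [hlog]; linarith
        calc t = Real.exp (Real.log t) := (Real.exp_log ht_pos).symm
          _ ≤ s := Real.exp_le_exp.mpr hlt
      have htm : t ≤ m/3 := by
        have h3 : β * (3 * Real.log m) ≤ m := (le_div_iff₀ (by positivity)).mp hβ_ub
        nlinarith
      have hk_gt : ((m:ℝ)-1)/t - 1 ≤ k := by
        have h := Nat.lt_floor_add_one (((m : ℝ) - 1) / t)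
        rw [hk]; push_cast; linarith [h]
      have hk_nonneg : (0:ℝ) ≤ k := by rw [hk]; positivity
      have hssq : (0:ℝ) ≤ s*s - 1 := by nlinarith
      have hD_pos : 0 < s + k * Real.exp β + ((m:ℝ)-1) - k := by
        rw [hsq]; nlinarith [mul_nonneg hk_nonneg hssq]
      rw [div_le_div_iff₀ hD_pos (by linarith), hsq]
      rcases le_or_gt s ((m:ℝ)/3) with hc | hc
      · set q := ((m:ℝ)-1)/s with hq
        have hqs : q * s = (m:ℝ)-1 := div_mul_cancel₀ _ (ne_of_gt hs_pos)
        have hq_le : q ≤ ((m:ℝ)-1)/t := div_le_div_of_nonneg_left (by linarith) ht_pos hst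
        have hkq : q - 1 ≤ k := by linarith
        have hq_nonneg : (0:ℝ) ≤ q := div_nonneg (by linarith) hs_pos.le
        have hqss : q*s*s = ((m:ℝ)-1)*s := by rw [hqs]
        have step1 : (q-1)*(s*s-1) ≤ k*(s*s-1) := mul_le_mul_of_nonneg_right hkq hssq
        have hq_m : q ≤ (m:ℝ)-1 := by
          nlinarith [mul_le_mul_of_nonneg_left hs1 hq_nonneg, hqs]
        have hms : 3*(s*s) ≤ (m:ℝ)*s := by
          nlinarith [mul_le_mul_of_nonneg_right hc hs_pos.le]
        nlinarith [step1, hqss, hq_m, hms]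
      · have hq_le : 3*((m:ℝ)-1)/m ≤ ((m:ℝ)-1)/t := by
          rw [show 3*((m:ℝ)-1)/m = ((m:ℝ)-1)/(m/3) by field_simp]
          exact div_le_div_of_nonneg_left (by linarith) ht_pos htm
        set r := 3*((m:ℝ)-1)/m - 1 with hr
        have hrm : r * m = 2*m - 3 := by rw [hr]; field_simp; ring
        have hkr : r ≤ k := by rw [hr]; linarith [hq_le, hk_gt]
        have step2 : r*(s*s-1) ≤ k*(s*s-1) := mul_le_mul_of_nonneg_right hkr hssq
        have h_key : 2*(m:ℝ)*s ≤ 3*(s + r*(s*s-1) + ((m:ℝ)-1)) := by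
          have hrms : r * m * (s*s-1) = (2*(m:ℝ)-3)*(s*s-1) := by rw [hrm]
          have hA : (0:ℝ) ≤ 3*(2*(m:ℝ)-3) * ((s - m/3)*(s - m/3)) :=
            mul_nonneg (by linarith) (mul_self_nonneg _)
          have hB : (0:ℝ) ≤ (s - (m:ℝ)/3) * (2*(m:ℝ)*(m:ℝ) - 3*(m:ℝ)) :=
            mul_nonneg (by linarith) (by nlinarith)
          have hmpos : (0:ℝ) < (m:ℝ) := by linarith
          nlinarith [hrms, hA, hB, hmpos]
        nlinarith [step2, h_key]
  have hfinal : (1/2)*(1/(m:ℝ)) + (1/2)*(3/(2*(m:ℝ))) = 5/(4*(m:ℝ)) := by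
    field_simp; ring
  linarith [h1, h2]
end

section
/- For every real m ≥ 10, (ln m) · (1 − exp(−2/ln m)) ≥ exp(−2/ln m) + ln(5/2). -/
open Real Finset

/-- Numeric bound: `log (5/2) ≤ 0.91635`. -/
lemma log_five_half_le : Real.log (5 / 2) ≤ 0.91635 := by
  rw [Real.log_le_iff_le_exp (by norm_num)]
  have h := Real.sum_le_exp_of_nonneg (x := 0.91635) (by norm_num) 8
  refine le_trans ?_ h
  simp only [Finset.sum_range_succ, Finset.sum_range_zero]
  norm_num [Nat.factorial]

/-- Numeric bound: `exp 0.7675 ≤ 2.1544`. -/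
lemma exp_aux_le : Real.exp 0.7675 ≤ 2.1544 := by
  have h := Real.exp_bound' (x := 0.7675) (by norm_num) (by norm_num) (n := 8) (by norm_num)
  refine h.trans ?_
  simp only [Finset.sum_range_succ, Finset.sum_range_zero]
  norm_num [Nat.factorial]

/-- Numeric bound: `2.3025 ≤ log 10`. -/
lemma log_ten_ge : (2.3025 : ℝ) ≤ Real.log 10 := by
  rw [Real.le_log_iff_exp_le (by norm_num)]
  have h : Real.exp 2.3025 = Real.exp 0.7675 ^ 3 := by
    rw [← Real.exp_nat_mul]; norm_num
  rw [h]
  calc Real.exp 0.7675 ^ 3 ≤ 2.1544 ^ 3 :=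
        pow_le_pow_left₀ (Real.exp_pos _).le exp_aux_le 3
    _ ≤ 10 := by norm_num

/-- The key polynomial inequality. -/
lemma key_poly {L : ℝ} (hL : (2.3025 : ℝ) ≤ L) :
    (L + 1) * L ^ 6
      ≤ (L - 0.91635) *
        (L ^ 6 + 2 * L ^ 5 + 2 * L ^ 4 + (4 / 3) * L ^ 3 + (2 / 3) * L ^ 2
          + (4 / 15) * L + 4 / 45) := by
  have hs : (0 : ℝ) ≤ L - 2.3025 := by linarith
  nlinarith [pow_nonneg hs 2, pow_nonneg hs 3, pow_nonneg hs 4, pow_nonneg hs 5,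
    pow_nonneg hs 6, hs, sq_nonneg (L - 2.3025)]

theorem plurality_veto_final_inequality (m : ℝ) (hm : 10 ≤ m) :
    Real.log m * (1 - Real.exp (-2 / Real.log m))
      ≥ Real.exp (-2 / Real.log m) + Real.log (5 / 2) := by
  set L := Real.log m with hLdef
  have hL : (2.3025 : ℝ) ≤ L := le_trans log_ten_ge (Real.log_le_log (by norm_num) hm)
  have hL0 : (0 : ℝ) < L := by linarith
  set E := Real.exp (-2 / L) with hEdef
  have hE0 : (0 : ℝ) < E := Real.exp_pos _
  -- Taylor lower bound for exp (2/L)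
  have hsum : (∑ i ∈ Finset.range 7, (2 / L) ^ i / i.factorial) ≤ Real.exp (2 / L) :=
    Real.sum_le_exp_of_nonneg (by positivity) 7
  have hsum_eq : (∑ i ∈ Finset.range 7, (2 / L) ^ i / i.factorial)
      = (L ^ 6 + 2 * L ^ 5 + 2 * L ^ 4 + (4 / 3) * L ^ 3 + (2 / 3) * L ^ 2
          + (4 / 15) * L + 4 / 45) / L ^ 6 := by
    simp only [Finset.sum_range_succ, Finset.sum_range_zero, Nat.factorial]
    field_simp
    ring
  have hBig : (0 : ℝ) < L ^ 6 + 2 * L ^ 5 + 2 * L ^ 4 + (4 / 3) * L ^ 3 + (2 / 3) * L ^ 2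
      + (4 / 15) * L + 4 / 45 := by positivity
  -- E * Big ≤ L^6
  have hE6 : E * (L ^ 6 + 2 * L ^ 5 + 2 * L ^ 4 + (4 / 3) * L ^ 3 + (2 / 3) * L ^ 2
      + (4 / 15) * L + 4 / 45) ≤ L ^ 6 := by
    have h1 : E * (∑ i ∈ Finset.range 7, (2 / L) ^ i / i.factorial) ≤ E * Real.exp (2 / L) :=
      mul_le_mul_of_nonneg_left hsum hE0.le
    have h2 : E * Real.exp (2 / L) = 1 := by
      rw [hEdef, ← Real.exp_add]; rw [neg_div]; ring_nf; exact Real.exp_zero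
    rw [hsum_eq, h2] at h1
    have h3 := mul_le_mul_of_nonneg_right h1 (le_of_lt (pow_pos hL0 6))
    calc E * (L ^ 6 + 2 * L ^ 5 + 2 * L ^ 4 + (4 / 3) * L ^ 3 + (2 / 3) * L ^ 2
          + (4 / 15) * L + 4 / 45)
        = E * ((L ^ 6 + 2 * L ^ 5 + 2 * L ^ 4 + (4 / 3) * L ^ 3 + (2 / 3) * L ^ 2
          + (4 / 15) * L + 4 / 45) / L ^ 6) * L ^ 6 := by
          field_simp
      _ ≤ 1 * L ^ 6 := h3
      _ = L ^ 6 := one_mul _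
  -- combine
  have hkey : (L + 1) * E ≤ L - 0.91635 := by
    have h4 : (L + 1) * E *
        (L ^ 6 + 2 * L ^ 5 + 2 * L ^ 4 + (4 / 3) * L ^ 3 + (2 / 3) * L ^ 2
          + (4 / 15) * L + 4 / 45) ≤ (L + 1) * L ^ 6 := by
      have := mul_le_mul_of_nonneg_left hE6 (by linarith : (0:ℝ) ≤ L + 1)
      linarith [this]
    have h5 := h4.trans (key_poly hL)
    exact le_of_mul_le_mul_right h5 hBig
  have hlog := log_five_half_le
  nlinarith [hkey, hlog]
end

section
/- Fix reals η ∈ (0, 1) and δ ∈ (0, 1), and let s = 1/(1 + exp(−δ)). For β > 0, define σ_β(t) = 1/(1 + exp(−β·t)), p(β) = (s − 1/2 − 1/β)/(s − σ_β(−1)), and q(β) = ( p(β)·(σ_β(η) − 1/2) − 1/β ) / ( 1/2 − σ_β(−1) ). Then, as β → ∞, ( p(β)·(1 − η) + q(β) ) / ( δ·(1 − p(β)) ) → (2 − η)·(2s − 1)/δ, which equals (2 − η)·tanh(δ/2)/δ. -/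
open Filter

open Topology

/-! As `β → ∞`, `σ_β(-1) → 0` and `σ_β(η) → 1`, so `p(β) → (s - 1/2)/s`, and `q(β)` has the
same limit because the factor `(σ_β(η) - 1/2)/(1/2 - σ_β(-1))` tends to `1`. Substituting gives
`(2 - η)(2s - 1)/δ`, and `2s - 1 = tanh (δ/2)` because `s` is the logistic function at `δ`. -/

theorem Real.tanh_half_eq_two_mul_logistic_sub_one (x : ℝ) :
    Real.tanh (x / 2) = 2 * (1 / (1 + Real.exp (-x))) - 1 := by
  have hsq : Real.exp (-x) = Real.exp (-(x / 2)) * Real.exp (-(x / 2)) := by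
    rw [← Real.exp_add]; ring_nf
  have hinv : Real.exp (x / 2) * Real.exp (-(x / 2)) = 1 := by
    rw [← Real.exp_add]; simp
  rw [Real.tanh_eq_sinh_div_cosh, Real.sinh_eq, Real.cosh_eq, hsq]
  field_simp
  linear_combination 2 * Real.exp (-(x / 2)) * hinv

theorem tendsto_sigma_atTop_of_neg {t : ℝ} (ht : t < 0) :
    Tendsto (fun β => sigma β t) atTop (𝓝 0) := by
  have hlin : Tendsto (fun β : ℝ => -(β * t)) atTop atTop := by
    simpa only [mul_neg, id] using (tendsto_mul_const_atTop_of_pos (neg_pos.2 ht)).2 tendsto_id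
  have hden : Tendsto (fun β => 1 + Real.exp (-(β * t))) atTop atTop :=
    tendsto_atTop_add_const_left _ 1 (Real.tendsto_exp_atTop.comp hlin)
  simpa only [sigma, one_div, Function.comp_def] using tendsto_inv_atTop_zero.comp hden

theorem tendsto_sigma_atTop_of_pos {t : ℝ} (ht : 0 < t) :
    Tendsto (fun β => sigma β t) atTop (𝓝 1) := by
  have hlin : Tendsto (fun β : ℝ => -(β * t)) atTop atBot := by
    simpa only [Function.comp_def, id] using
      tendsto_neg_atTop_atBot.comp ((tendsto_mul_const_atTop_of_pos ht).2 tendsto_id)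
  have hden : Tendsto (fun β => 1 + Real.exp (-(β * t))) atTop (𝓝 (1 + 0)) :=
    tendsto_const_nhds.add (Real.tendsto_exp_atBot.comp hlin)
  simpa only [sigma, add_zero, div_one, Pi.div_def] using tendsto_const_nhds.div hden (by norm_num)

theorem tendsto_one_div_atTop : Tendsto (fun x : ℝ => 1 / x) atTop (𝓝 0) :=
  tendsto_const_nhds.div_atTop tendsto_id

-- The voter-type fractions of the three-candidate construction, chosen so that the pairwise
-- margins `p_{W,Y}` and `p_{Y,B}` both equal `1/2 + 1/β`.
noncomputable def voterFractionP (s β : ℝ) : ℝ := (s - 1/2 - 1/β) / (s - sigma β (-1))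

noncomputable def voterFractionQ (s η β : ℝ) : ℝ :=
  (voterFractionP s β * (sigma β η - 1/2) - 1/β) / (1/2 - sigma β (-1))

theorem tendsto_voterFractionP {s : ℝ} (hs : s ≠ 0) :
    Tendsto (voterFractionP s) atTop (𝓝 ((s - 1/2) / s)) := by
  have h := ((tendsto_const_nhds (x := s - 1/2)).sub tendsto_one_div_atTop).div
    ((tendsto_const_nhds (x := s)).sub (tendsto_sigma_atTop_of_neg neg_one_lt_zero))
    (by rwa [sub_zero])
  rw [sub_zero, sub_zero] at h
  exact h

theorem tendsto_voterFractionQ {s η : ℝ} (hs : s ≠ 0) (hη : 0 < η) :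
    Tendsto (voterFractionQ s η) atTop (𝓝 ((s - 1/2) / s)) := by
  have h := (((tendsto_voterFractionP hs).mul
      ((tendsto_sigma_atTop_of_pos hη).sub_const (1/2))).sub tendsto_one_div_atTop).div
    ((tendsto_sigma_atTop_of_neg neg_one_lt_zero).const_sub (1/2)) (by norm_num)
  rwa [show ((s - 1/2) / s * (1 - 1/2) - 0) / (1/2 - 0) = (s - 1/2) / s by ring] at h

theorem copeland_lower_bound_limit (η δ : ℝ) (hη : η ∈ Set.Ioo (0:ℝ) 1)
    (hδ : δ ∈ Set.Ioo (0:ℝ) 1) :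
    let s : ℝ := 1 / (1 + Real.exp (-δ))
    let p : ℝ → ℝ := fun β => (s - 1/2 - 1/β) / (s - sigma β (-1))
    let q : ℝ → ℝ := fun β => (p β * (sigma β η - 1/2) - 1/β) / (1/2 - sigma β (-1))
    Tendsto (fun β => (p β * (1 - η) + q β) / (δ * (1 - p β)))
      atTop (nhds ((2 - η) * (2 * s - 1) / δ)) ∧
    (2 - η) * (2 * s - 1) / δ = (2 - η) * Real.tanh (δ / 2) / δ := by
  intro s p q
  have hs : 0 < s := by positivity
  have hp : Tendsto p atTop (𝓝 ((s - 1/2) / s)) := tendsto_voterFractionP hs.ne'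
  have hq : Tendsto q atTop (𝓝 ((s - 1/2) / s)) := tendsto_voterFractionQ hs.ne' hη.1
  have hlim := ((hp.mul_const (1 - η)).add hq).div ((hp.const_sub 1).const_mul δ)
    (mul_pos hδ.1 (by rw [sub_pos, div_lt_one hs]; linarith)).ne'
  have hvalue : ((s - 1/2) / s * (1 - η) + (s - 1/2) / s) / (δ * (1 - (s - 1/2) / s))
      = (2 - η) * (2 * s - 1) / δ := by
    field_simp [hs.ne']
    ring
  rw [hvalue] at hlim
  exact ⟨hlim, by rw [Real.tanh_half_eq_two_mul_logistic_sub_one]⟩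
end

section
/- Fix a real η. For γ ∈ (0, 1/10], define p(γ) = (6γ + 4γ²)/(1 + 6γ), q(γ) = (4γ − 8γ²)/(1 + 6γ), s(γ) = (1/2 + 4γ + 6γ²)/(1 − 4γ²), and δ(γ) = ln( s(γ)/(1 − s(γ)) ). Then, as γ → 0⁺, ( p(γ)·(1 − η) + q(γ) ) / ( δ(γ)·(1 − p(γ)) ) → (5 − 3η)/8. -/
/-!
The odds ratio simplifies: `s / (1 - s) = (1 + 6γ) / (1 - 10γ)`, and `p`, `q`, `1 - p` share the
denominator `1 + 6γ`, which cancels. The welfare ratio is thus a quotient of two functions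
vanishing at `0`, with derivatives `10 - 6η` (numerator) and `16` (the derivative of
`log (1 + 6γ) - log (1 - 10γ)`), so its limit is `(10 - 6η) / 16`.
-/

open Filter Topology Set

theorem tendsto_div_of_hasDerivAt_of_eq_zero {f g : ℝ → ℝ} {f' g' a : ℝ}
    (hf : HasDerivAt f f' a) (hg : HasDerivAt g g' a) (hfa : f a = 0) (hga : g a = 0)
    (hg' : g' ≠ 0) : Tendsto (fun x => f x / g x) (𝓝[≠] a) (𝓝 (f' / g')) := by
  refine ((hasDerivAt_iff_tendsto_slope.mp hf).div
    (hasDerivAt_iff_tendsto_slope.mp hg) hg').congr' ?_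
  filter_upwards [self_mem_nhdsWithin] with x hx
  rw [Pi.div_apply, slope_def_field, slope_def_field, hfa, hga, sub_zero, sub_zero,
    div_div_div_cancel_right₀ (sub_ne_zero.mpr hx)]

theorem odds_ratio_eq {γ : ℝ} (h : 1 - 4 * γ ^ 2 ≠ 0) :
    (1/2 + 4 * γ + 6 * γ ^ 2) / (1 - 4 * γ ^ 2) /
      (1 - (1/2 + 4 * γ + 6 * γ ^ 2) / (1 - 4 * γ ^ 2)) = (1 + 6 * γ) / (1 - 10 * γ) := by
  have h2 : (1 + 2 * γ) / 2 ≠ 0 :=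
    div_ne_zero (fun h0 => h (by linear_combination (1 - 2 * γ) * h0)) two_ne_zero
  rw [one_sub_div h, div_div_div_cancel_right₀ h]
  calc (1/2 + 4 * γ + 6 * γ ^ 2) / (1 - 4 * γ ^ 2 - (1/2 + 4 * γ + 6 * γ ^ 2))
      = ((1 + 2 * γ) / 2 * (1 + 6 * γ)) / ((1 + 2 * γ) / 2 * (1 - 10 * γ)) := by
        congr 1 <;> ring
    _ = (1 + 6 * γ) / (1 - 10 * γ) := mul_div_mul_left _ _ h2

theorem welfare_ratio_eq (η : ℝ) {γ : ℝ} (h6 : 1 + 6 * γ ≠ 0) (h4 : 1 - 4 * γ ^ 2 ≠ 0) :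
    ((6 * γ + 4 * γ ^ 2) / (1 + 6 * γ) * (1 - η) + (4 * γ - 8 * γ ^ 2) / (1 + 6 * γ)) /
      (Real.log ((1/2 + 4 * γ + 6 * γ ^ 2) / (1 - 4 * γ ^ 2) /
        (1 - (1/2 + 4 * γ + 6 * γ ^ 2) / (1 - 4 * γ ^ 2))) *
          (1 - (6 * γ + 4 * γ ^ 2) / (1 + 6 * γ)))
    = ((6 * γ + 4 * γ ^ 2) * (1 - η) + (4 * γ - 8 * γ ^ 2)) /
      (Real.log ((1 + 6 * γ) / (1 - 10 * γ)) * (1 - 4 * γ ^ 2)) := by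
  have hnum : (6 * γ + 4 * γ ^ 2) / (1 + 6 * γ) * (1 - η) + (4 * γ - 8 * γ ^ 2) / (1 + 6 * γ)
      = ((6 * γ + 4 * γ ^ 2) * (1 - η) + (4 * γ - 8 * γ ^ 2)) / (1 + 6 * γ) := by
    rw [div_mul_eq_mul_div, ← add_div]
  have hden : 1 - (6 * γ + 4 * γ ^ 2) / (1 + 6 * γ) = (1 - 4 * γ ^ 2) / (1 + 6 * γ) := by
    rw [one_sub_div h6]; ring
  rw [odds_ratio_eq h4, hnum, hden, mul_div_assoc', div_div_div_cancel_right₀ h6]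

theorem hasDerivAt_welfare_numerator (η : ℝ) :
    HasDerivAt (fun γ : ℝ => (6 * γ + 4 * γ ^ 2) * (1 - η) + (4 * γ - 8 * γ ^ 2))
      (10 - 6 * η) 0 := by
  have hid := hasDerivAt_id' (0 : ℝ)
  have hsq := hasDerivAt_pow 2 (0 : ℝ)
  exact ((((hid.const_mul 6).add (hsq.const_mul 4)).mul_const (1 - η)).add
    ((hid.const_mul 4).sub (hsq.const_mul 8))).congr_deriv (by norm_num; ring)

theorem hasDerivAt_welfare_denominator :
    HasDerivAt (fun γ : ℝ => Real.log ((1 + 6 * γ) / (1 - 10 * γ)) * (1 - 4 * γ ^ 2)) 16 0 := by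
  have hid := hasDerivAt_id' (0 : ℝ)
  have hsq := hasDerivAt_pow 2 (0 : ℝ)
  exact (((((hid.const_mul 6).const_add 1).div
    ((hid.const_mul 10).const_sub 1) (by norm_num)).log (by norm_num)).mul
    ((hsq.const_mul 4).const_sub 1)).congr_deriv (by norm_num)

theorem finite_precision_welfare_ratio_limit (η : ℝ) :
    let p : ℝ → ℝ := fun γ => (6 * γ + 4 * γ ^ 2) / (1 + 6 * γ)
    let q : ℝ → ℝ := fun γ => (4 * γ - 8 * γ ^ 2) / (1 + 6 * γ)
    let s : ℝ → ℝ := fun γ => (1/2 + 4 * γ + 6 * γ ^ 2) / (1 - 4 * γ ^ 2)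
    let δ : ℝ → ℝ := fun γ => Real.log (s γ / (1 - s γ))
    Tendsto (fun γ => (p γ * (1 - η) + q γ) / (δ γ * (1 - p γ)))
      (nhdsWithin 0 (Set.Ioc (0:ℝ) (1/10))) (nhds ((5 - 3 * η) / 8)) := by
  intro p q s δ
  have hlim := (tendsto_div_of_hasDerivAt_of_eq_zero (hasDerivAt_welfare_numerator η)
    hasDerivAt_welfare_denominator (by simp) (by simp) (by norm_num)).mono_left
    (nhdsWithin_mono 0 fun γ (hγ : γ ∈ Ioc (0 : ℝ) (1/10)) => hγ.1.ne')
  rw [show (5 - 3 * η) / 8 = (10 - 6 * η) / 16 by ring]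
  refine hlim.congr' (eventually_nhdsWithin_of_eventually_nhds ?_)
  filter_upwards [Ioo_mem_nhds (show (-1/10 : ℝ) < 0 by norm_num)
    (show (0 : ℝ) < 1/10 by norm_num)] with γ ⟨hlo, hhi⟩
  exact (welfare_ratio_eq η (by nlinarith) (by nlinarith)).symm
end
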